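/- Let G = (V,E) be a finite, connected, undirected graph with no self-loops, V = {1,…,N} with N ≥ 2, and let ω̃_ij = ω̃_ji > 0 for (i,j) ∈ E. Then the discrete Fisher information blows up at the boundary of the probability simplex: for every M > 0 there exists δ > 0 such that every ρ ∈ P_o(G) with min_{1≤i≤N} ρ_i < δ satisfies I(ρ) > M. Equivalently, for any sequence ρ^n ∈ P_o(G) with min_i ρ^n_i → 0 one has I(ρ^n) → +∞. -/

import Mathlib

open scoped BigOperators

noncomputable section

/-- Discrete Fisher information
`I(ρ) = (1/2) ∑_i ∑_{j∈N(i)} ω̃_ij (log ρ_i - log ρ_j)(ρ_i - ρ_j)`. -/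
def fisherI {N : ℕ} (E : Fin N → Fin N → Prop) [DecidableRel E]
    (ωt : Fin N → Fin N → ℝ) (ρ : Fin N → ℝ) : ℝ :=
  (1 / 2) * ∑ i, ∑ j,
    (if E i j then ωt i j * (Real.log (ρ i) - Real.log (ρ j)) * (ρ i - ρ j) else 0)

def Lseq (C x0 : ℝ) : ℕ → ℝ
  | 0 => x0
  | n+1 => Lseq C x0 n * ((1/2) * Real.exp (-(2*C) / Lseq C x0 n))

lemma Lseq_pos {C x0 : ℝ} (hx : 0 < x0) : ∀ n, 0 < Lseq C x0 n
  | 0 => hx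
  | n+1 => by
      have := Lseq_pos (C := C) hx n
      simp only [Lseq]; positivity

lemma Lseq_succ_le {C x0 : ℝ} (hC : 0 < C) (hx : 0 < x0) (n : ℕ) :
    Lseq C x0 (n+1) ≤ Lseq C x0 n / 2 := by
  have hL := Lseq_pos (C := C) hx n
  have hexp : Real.exp (-(2*C) / Lseq C x0 n) ≤ 1 := by
    rw [Real.exp_le_one_iff]
    apply div_nonpos_of_nonpos_of_nonneg <;> nlinarith
  show Lseq C x0 n * ((1/2) * Real.exp (-(2*C) / Lseq C x0 n)) ≤ Lseq C x0 n / 2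
  nlinarith [Real.exp_pos (-(2*C) / Lseq C x0 n)]

lemma Lseq_anti {C x0 : ℝ} (hC : 0 < C) (hx : 0 < x0) : Antitone (Lseq C x0) := by
  apply antitone_nat_of_succ_le
  intro n
  have := Lseq_succ_le hC hx n
  have := Lseq_pos (C := C) hx n
  linarith

lemma Lseq_log {C x0 : ℝ} (hC : 0 < C) (hx : 0 < x0) (n : ℕ) :
    2*C / Lseq C x0 n ≤ Real.log (Lseq C x0 n) - Real.log (Lseq C x0 (n+1)) := by
  have hL := Lseq_pos (C := C) hx n
  have hlog : Real.log (Lseq C x0 (n+1)) =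
      Real.log (Lseq C x0 n) + (Real.log (1/2) + -(2*C) / Lseq C x0 n) := by
    show Real.log (Lseq C x0 n * ((1/2) * Real.exp (-(2*C) / Lseq C x0 n))) = _
    rw [Real.log_mul (ne_of_gt hL) (by positivity),
        Real.log_mul (by norm_num) (Real.exp_ne_zero _), Real.log_exp]
  have h2 : Real.log (1/2) ≤ 0 := Real.log_nonpos (by norm_num) (by norm_num)
  have hneg : -(2*C) / Lseq C x0 n = -(2*C / Lseq C x0 n) := neg_div _ _
  rw [hlog, hneg]
  linarith

lemma exists_crossing_edge {N : ℕ} {E : Fin N → Fin N → Prop} {A : Set (Fin N)}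
    {s t : Fin N} (h : Relation.ReflTransGen (fun a b => E a b) s t) :
    s ∈ A → t ∉ A → ∃ a b, a ∈ A ∧ b ∉ A ∧ E a b := by
  induction h with
  | refl => exact fun hs ht => absurd hs ht
  | @tail c d _ hcd ih =>
    intro hs ht
    by_cases hc : c ∈ A
    · exact ⟨c, d, hc, ht, hcd⟩
    · exact ih hs hc


/-- On a connected graph with `N ≥ 2` nodes, the discrete Fisher information blows up
at the boundary of the probability simplex: for every `M > 0` there is `δ > 0` such
that every interior density with some coordinate below `δ` has Fisher information
exceeding `M`. -/
theorem fisher_information_blows_up_at_boundary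
    (N : ℕ) (hN : 2 ≤ N) (E : Fin N → Fin N → Prop) [DecidableRel E]
    (hEsymm : ∀ i j, E i j ↔ E j i) (hEirr : ∀ i, ¬ E i i)
    (hconn : ∀ i j : Fin N, Relation.ReflTransGen (fun a b => E a b) i j)
    (ωt : Fin N → Fin N → ℝ) (hωtsymm : ∀ i j, ωt i j = ωt j i)
    (hωtpos : ∀ i j, E i j → 0 < ωt i j) :
    ∀ M : ℝ, 0 < M → ∃ δ : ℝ, 0 < δ ∧
      ∀ ρ : Fin N → ℝ, (∀ i, 0 < ρ i) → (∑ i, ρ i = 1) →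
        (∃ i, ρ i < δ) → M < fisherI E ωt ρ := by
  intro M hM
  have hNpos : 0 < N := by omega
  have hNR : (0:ℝ) < N := by exact_mod_cast hNpos
  -- minimal edge weight
  set S : Finset (Fin N × Fin N) :=
    Finset.univ.filter (fun p => E p.1 p.2) with hSdef
  set w : ℝ := if h : S.Nonempty then S.inf' h (fun p => ωt p.1 p.2) else 1 with hwdef
  have hw : 0 < w := by
    rw [hwdef]
    split_ifs with h
    · rw [Finset.lt_inf'_iff]
      intro p hp
      exact hωtpos p.1 p.2 (by simpa [hSdef] using hp)
    · norm_num
  have hwle : ∀ i j, E i j → w ≤ ωt i j := by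
    intro i j hij
    have hmem : (i, j) ∈ S := by simp [hSdef, hij]
    rw [hwdef]
    rw [dif_pos ⟨(i, j), hmem⟩]
    exact Finset.inf'_le _ hmem
  -- constant C and levels
  set C : ℝ := (2*M + 1) / w with hCdef
  have hC : 0 < C := by positivity
  set x0 : ℝ := (N : ℝ)⁻¹ with hx0def
  have hx0 : 0 < x0 := by positivity
  set L : ℕ → ℝ := Lseq C x0 with hLdef
  have hLpos : ∀ n, 0 < L n := fun n => Lseq_pos hx0 n
  have hLanti : Antitone L := Lseq_anti hC hx0
  refine ⟨L N, hLpos N, ?_⟩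
  intro ρ hρpos hsum ⟨s, hs⟩
  -- there is a vertex with ρ t ≥ 1/N
  obtain ⟨t, ht⟩ : ∃ t, (N:ℝ)⁻¹ ≤ ρ t := by
    by_contra h
    push_neg at h
    have h1 : (1:ℝ) < 1 := by
      calc (1:ℝ) = ∑ i, ρ i := hsum.symm
        _ < ∑ _i : Fin N, (N:ℝ)⁻¹ :=
          Finset.sum_lt_sum_of_nonempty ⟨⟨0, hNpos⟩, Finset.mem_univ _⟩ (fun i _ => h i)
        _ = 1 := by
          rw [Finset.sum_const, Finset.card_univ, Fintype.card_fin, nsmul_eq_mul]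
          field_simp
    exact lt_irrefl 1 h1
  -- pigeonhole: an empty level interval
  obtain ⟨m, hmN, hempty⟩ : ∃ m, m < N ∧ ∀ i, ρ i < L (m+1) ∨ L m ≤ ρ i := by
    by_contra h
    push_neg at h
    have h' : ∀ m : ℕ, m < N → ∃ i, L (m+1) ≤ ρ i ∧ ρ i < L m := by
      intro m hm
      obtain ⟨i, h1, h2⟩ := h m hm
      exact ⟨i, h1, h2⟩
    set v : Fin N → Fin N := fun m => (h' m.1 m.2).choose with hvdef
    have hv : ∀ m : Fin N, L (m.1+1) ≤ ρ (v m) ∧ ρ (v m) < L m.1 :=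
      fun m => (h' m.1 m.2).choose_spec
    have hinj : Function.Injective v := by
      intro m1 m2 heq
      by_contra hne
      have hne' : m1.1 ≠ m2.1 := fun hh => hne (Fin.ext hh)
      rcases Nat.lt_or_ge m1.1 m2.1 with hlt | hge
      · have : L m2.1 ≤ L (m1.1 + 1) := hLanti hlt
        have h1 := (hv m1).1
        have h2 := (hv m2).2
        rw [heq] at h1
        linarith
      · have hlt : m2.1 < m1.1 := by omega
        have : L m1.1 ≤ L (m2.1 + 1) := hLanti hlt
        have h1 := (hv m2).1
        have h2 := (hv m1).2
        rw [heq] at h2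
        linarith
    have hsurj : Function.Surjective v := Finite.surjective_of_injective hinj
    obtain ⟨m, hm⟩ := hsurj s
    have h1 := (hv m).1
    rw [hm] at h1
    have h2 : L N ≤ L (m.1 + 1) := hLanti (by omega)
    linarith
  -- the crossing edge
  set A : Set (Fin N) := {i | ρ i < L (m+1)} with hAdef
  have hsA : s ∈ A := by
    have : L N ≤ L (m+1) := hLanti (by omega)
    simp only [hAdef, Set.mem_setOf_eq]
    linarith
  have htA : t ∉ A := by
    have h1 : L (m+1) ≤ L 0 := hLanti (by omega)
    have h2 : L 0 = (N:ℝ)⁻¹ := rfl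
    simp only [hAdef, Set.mem_setOf_eq, not_lt]
    linarith
  obtain ⟨a, b, haA, hbA, hab⟩ := exists_crossing_edge (hconn s t) hsA htA
  have hEba : E b a := (hEsymm a b).mp hab
  have hρa : ρ a < L (m+1) := haA
  have hρb : L m ≤ ρ b := by
    rcases hempty b with h1 | h1
    · exact absurd h1 hbA
    · exact h1
  -- key lower bounds on the crossing edge term
  have hLm := hLpos m
  have hhalf : L (m+1) ≤ L m / 2 := Lseq_succ_le hC hx0 m
  have hdiff : L m / 2 ≤ ρ b - ρ a := by linarith
  have hlogLb : Real.log (L m) ≤ Real.log (ρ b) :=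
    Real.log_le_log hLm hρb
  have hlogLa : Real.log (ρ a) ≤ Real.log (L (m+1)) :=
    (Real.log_le_log (hρpos a) (le_of_lt hρa))
  have hlogdiff : 2*C / L m ≤ Real.log (ρ b) - Real.log (ρ a) := by
    have := Lseq_log hC hx0 m
    have hrw : Lseq C x0 m = L m := rfl
    have hrw2 : Lseq C x0 (m+1) = L (m+1) := rfl
    rw [hrw, hrw2] at this
    linarith
  have hterm : 2*M + 1 ≤ ωt b a * (Real.log (ρ b) - Real.log (ρ a)) * (ρ b - ρ a) := by
    have h1 : w * (2*C / L m) ≤ ωt b a * (Real.log (ρ b) - Real.log (ρ a)) := by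
      apply mul_le_mul (hwle b a hEba) hlogdiff (by positivity)
      exact le_of_lt (hωtpos b a hEba)
    have h2 : w * (2*C / L m) * (L m / 2) ≤
        ωt b a * (Real.log (ρ b) - Real.log (ρ a)) * (ρ b - ρ a) := by
      apply mul_le_mul h1 hdiff (by positivity)
      have hwba := hωtpos b a hEba
      nlinarith [hlogdiff, div_pos (by positivity : (0:ℝ) < 2*C) hLm]
    have h3 : w * (2*C / L m) * (L m / 2) = w * C := by
      field_simp
    have h4 : w * C = 2*M + 1 := by
      rw [hCdef]
      field_simp
    linarith
  -- each summand is nonnegative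
  set f : Fin N → Fin N → ℝ := fun i j =>
    if E i j then ωt i j * (Real.log (ρ i) - Real.log (ρ j)) * (ρ i - ρ j) else 0
    with hfdef
  have hf0 : ∀ i j, 0 ≤ f i j := by
    intro i j
    rw [hfdef]
    dsimp only
    split_ifs with hij
    · have hsign : 0 ≤ (Real.log (ρ i) - Real.log (ρ j)) * (ρ i - ρ j) := by
        rcases le_total (ρ i) (ρ j) with hle | hle
        · have := Real.log_le_log (hρpos i) hle
          nlinarith
        · have := Real.log_le_log (hρpos j) hle
          nlinarith
      rw [mul_assoc]
      exact mul_nonneg (le_of_lt (hωtpos i j hij)) hsign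
    · exact le_refl 0
  -- assemble
  have hsingle : f b a ≤ ∑ i, ∑ j, f i j := by
    calc f b a ≤ ∑ j, f b j :=
          Finset.single_le_sum (fun j _ => hf0 b j) (Finset.mem_univ a)
      _ ≤ ∑ i, ∑ j, f i j :=
          Finset.single_le_sum (fun i _ => Finset.sum_nonneg fun j _ => hf0 i j)
            (Finset.mem_univ b)
  have hfba : 2*M + 1 ≤ f b a := by
    rw [hfdef]
    dsimp only
    rw [if_pos hEba]
    exact hterm
  have hfisher : fisherI E ωt ρ = (1/2) * ∑ i, ∑ j, f i j := rfl
  linarith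


end
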